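/- arXiv:2303.17303 — 3 statements merged into one kernel-verified Lean document; each statement's English description precedes it below -/
import Mathlib

section
/- Let V be a separable real Banach space. Then V* has the weak* Lebesgue density property: every f ∈ L^∞_*((0,1);V*) has a weak* representative g satisfying the weak* Lebesgue density theorem, i.e. for almost every t ∈ (0,1) the Gelfand averages (1/h)∫_t^{t+h} g(s) ds converge to g(t) in the weak* topology of V* as h → 0. -/
open MeasureTheory Filter Set Topology NNReal ENNReal

noncomputable section

/-- `Ω` is a bounded domain in `ℝⁿ`: a nonempty open connected bounded set. -/
def IsBoundedDomain {n : ℕ} (Ω : Set (EuclideanSpace ℝ (Fin n))) : Prop :=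
  IsOpen Ω ∧ IsConnected Ω ∧ Bornology.IsBounded Ω
/-- `t` is a weak* Lebesgue point of `g`: the Gelfand averages `(1/h)∫_t^{t+h} g`
converge to `g t` in the weak* topology as `h → 0`, i.e. the pairings with every
`v ∈ V` converge. -/
def WeakStarLebesguePoint {V : Type*} [NormedAddCommGroup V] [NormedSpace ℝ V]
    (g : ℝ → StrongDual ℝ V) (t : ℝ) : Prop :=
  ∀ v : V, Filter.Tendsto (fun h : ℝ => (∫ s in t..(t + h), g s v) / h)
    (nhdsWithin 0 {0}ᶜ) (nhds (g t v))

/-- `V*` has the weak* Lebesgue density property: every `f ∈ L^∞_*((0,1); V*)` has a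
weak* representative `g` satisfying the weak* Lebesgue density theorem. -/
def HasWeakStarLebesgueDensityProperty (V : Type*) [NormedAddCommGroup V]
    [NormedSpace ℝ V] : Prop :=
  ∀ f : ℝ → StrongDual ℝ V,
    (∀ v : V, AEMeasurable (fun t => f t v) (volume.restrict (Set.Ioo (0:ℝ) 1))) →
    (∃ M : ℝ, ∀ᵐ t ∂(volume.restrict (Set.Ioo (0:ℝ) 1)), ‖f t‖ ≤ M) →
    ∃ g : ℝ → StrongDual ℝ V,
      (∀ v : V, ∀ᵐ t ∂(volume.restrict (Set.Ioo (0:ℝ) 1)), f t v = g t v) ∧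
      ∀ᵐ t ∂(volume.restrict (Set.Ioo (0:ℝ) 1)), WeakStarLebesguePoint g t

/-! For fixed `t`, the averages `v ↦ (1/h) ∫_t^{t+h} g(s) v ds` are Lipschitz in `v` with the
essential bound of `g` as a constant independent of `h`, so the set of `v` along which they
converge to `g(t) v` is closed. By the scalar Lebesgue differentiation theorem, for almost every
`t` this set contains a dense sequence of the separable space `V`, hence it is all of `V`.
A representative of `f` is obtained by cutting `f` off outside a measurable full-measure subset
of `(0,1)` on which it is bounded. -/

open TopologicalSpace

theorem MeasureTheory.LocallyIntegrable.ae_tendsto_intervalIntegral_div {φ : ℝ → ℝ}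
    (hφ : LocallyIntegrable φ) :
    ∀ᵐ t, Tendsto (fun h => (∫ s in t..t + h, φ s) / h) (𝓝[≠] 0) (𝓝 (φ t)) := by
  filter_upwards [_root_.LocallyIntegrable.ae_hasDerivAt_integral hφ] with t ht
  simpa [div_eq_inv_mul] using (ht t).tendsto_slope_zero

section WeakStar

variable {V : Type*} [NormedAddCommGroup V] [NormedSpace ℝ V]
  {g : ℝ → StrongDual ℝ V} {M : ℝ≥0}

theorem locallyIntegrable_apply_of_ae_norm_le (hg : ∀ v, AEMeasurable (fun t => g t v))
    (hM : ∀ᵐ t, ‖g t‖ ≤ M) (v : V) : LocallyIntegrable (fun t => g t v) := by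
  refine locallyIntegrable_iff.2 fun k hk =>
    Measure.integrableOn_of_bounded hk.measure_lt_top.ne (hg v).aestronglyMeasurable
      (M := M * ‖v‖) (ae_restrict_of_ae ?_)
  filter_upwards [hM] with t ht
  exact (g t).le_of_opNorm_le ht v

theorem lipschitzWith_intervalIntegral_apply_div (hg : ∀ v, LocallyIntegrable (fun t => g t v))
    (hM : ∀ᵐ t, ‖g t‖ ≤ M) (t h : ℝ) :
    LipschitzWith M fun v => (∫ s in t..t + h, g s v) / h := by
  refine LipschitzWith.of_dist_le_mul fun v w => ?_
  have hint : ∀ u, IntervalIntegrable (fun s => g s u) volume t (t + h) := fun u =>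
    ((hg u).integrableOn_isCompact isCompact_uIcc).intervalIntegrable
  have hdiff : ‖∫ s in t..t + h, g s (v - w)‖ ≤ M * ‖v - w‖ * |t + h - t| :=
    intervalIntegral.norm_integral_le_of_norm_le_const_ae <| by
      filter_upwards [hM] with s hs _
      exact (g s).le_of_opNorm_le hs _
  rw [Real.dist_eq, div_sub_div_same, ← intervalIntegral.integral_sub (hint v) (hint w), abs_div,
    dist_eq_norm]
  simp only [← map_sub]
  exact div_le_of_le_mul₀ (abs_nonneg h) (by positivity) (by simpa using hdiff)

theorem isClosed_setOf_tendsto_intervalIntegral_apply_div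
    (hg : ∀ v, LocallyIntegrable (fun t => g t v)) (hM : ∀ᵐ t, ‖g t‖ ≤ M) (t : ℝ) :
    IsClosed {v | Tendsto (fun h => (∫ s in t..t + h, g s v) / h) (𝓝[≠] 0) (𝓝 (g t v))} :=
  (LipschitzWith.uniformEquicontinuous _ M
    (lipschitzWith_intervalIntegral_apply_div hg hM t)).equicontinuous.isClosed_setOfPred_tendsto
    (g t).continuous

theorem ae_weakStarLebesguePoint_of_ae_norm_le [SeparableSpace V]
    (hg : ∀ v, AEMeasurable (fun t => g t v)) (hM : ∀ᵐ t, ‖g t‖ ≤ M) :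
    ∀ᵐ t, WeakStarLebesguePoint g t := by
  have hloc := locallyIntegrable_apply_of_ae_norm_le hg hM
  have hdense : ∀ᵐ t, ∀ n, Tendsto (fun h => (∫ s in t..t + h, g s (denseSeq V n)) / h)
      (𝓝[≠] 0) (𝓝 (g t (denseSeq V n))) :=
    ae_all_iff.2 fun n => (hloc _).ae_tendsto_intervalIntegral_div
  filter_upwards [hdense] with t ht v
  exact (denseRange_denseSeq V).induction_on v
    (isClosed_setOf_tendsto_intervalIntegral_apply_div hloc hM t) ht

end WeakStar

theorem hasWeakStarLDP_of_separable_general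
    {V : Type*} [NormedAddCommGroup V] [NormedSpace ℝ V]
    [TopologicalSpace.SeparableSpace V] :
    HasWeakStarLebesgueDensityProperty V := by
  intro f hf ⟨M, hM⟩
  obtain ⟨s, hs, hs_meas, hs_le⟩ := hM.exists_measurable_mem
  set D := s ∩ Ioo (0 : ℝ) 1
  have hD_ae : ∀ᵐ t ∂(volume.restrict (Ioo (0 : ℝ) 1)), t ∈ D :=
    inter_mem hs (ae_restrict_mem measurableSet_Ioo)
  refine ⟨D.indicator f, fun v => ?_, ae_restrict_of_ae <|
    ae_weakStarLebesguePoint_of_ae_norm_le (M := M.toNNReal) (fun v => ?_) (.of_forall fun t => ?_)⟩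
  · filter_upwards [hD_ae] with t ht
    rw [indicator_of_mem ht]
  · have hind : (fun t => D.indicator f t v) = D.indicator (fun t => f t v) :=
      (indicator_comp_of_zero (g := fun φ : StrongDual ℝ V => φ v) rfl).symm
    rw [hind, aemeasurable_indicator_iff (hs_meas.inter measurableSet_Ioo)]
    exact (hf v).mono_measure (Measure.restrict_mono inter_subset_right le_rfl)
  · by_cases ht : t ∈ D
    · simpa [indicator_of_mem ht] using (hs_le t ht.1).trans (Real.le_coe_toNNReal M)
    · simp [indicator_of_notMem ht]

/-- If `V` is a separable real Banach space, then `V*` has the weak* Lebesgue density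
property: every `f ∈ L^∞_*((0,1);V*)` has a weak* representative satisfying the weak*
Lebesgue density theorem. -/
theorem hasWeakStarLDP_of_separable
    {V : Type*} [NormedAddCommGroup V] [NormedSpace ℝ V] [CompleteSpace V]
    [TopologicalSpace.SeparableSpace V] :
    HasWeakStarLebesgueDensityProperty V :=
  hasWeakStarLDP_of_separable_general
end
end

section
/- Let V be a real Banach space and suppose every Lipschitz curve γ: (0,1) → V* is differentiable in norm at almost every point (this holds in particular whenever V* has the Radon–Nikodým property). Then V* has the weak* Lebesgue density property: every f ∈ L^∞_*((0,1);V*) has a weak* representative g satisfying the weak* Lebesgue density theorem. -/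
open MeasureTheory Filter Set Topology NNReal ENNReal

noncomputable section

/-!
The Gelfand primitive `γ t = ∫₀ᵗ f` of a bounded weak* measurable `f` is Lipschitz into `V*`,
hence by hypothesis differentiable in norm almost everywhere. Tested against a fixed `v`, its
derivative is the derivative of the scalar primitive of `⟨v, f⟩`, which is `⟨v, f⟩` almost
everywhere by the Lebesgue differentiation theorem; so the norm derivative `g` is a weak*
representative of `f`. Since `γ` is then also a primitive of `g`, the averages of `g` over
`[t, t + h]` are difference quotients of `γ`, which converge to `g t` wherever `γ` is
differentiable.
-/

theorem HasDerivAt.clm_apply_const {𝕜 E F : Type*} [NontriviallyNormedField 𝕜]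
    [NormedAddCommGroup E] [NormedSpace 𝕜 E] [NormedAddCommGroup F] [NormedSpace 𝕜 F]
    {c : 𝕜 → E →L[𝕜] F} {c' : E →L[𝕜] F} {t : 𝕜} (hc : HasDerivAt c c' t) (v : E) :
    HasDerivAt (fun s => c s v) (c' v) t := by
  simpa using hc.clm_apply (hasDerivAt_const t v)

section WeakStarPrimitive

variable {V : Type*} [NormedAddCommGroup V] [NormedSpace ℝ V]

theorem integrable_apply_of_ae_norm_le {α : Type*} [MeasurableSpace α] {μ : Measure α}
    [IsFiniteMeasure μ] {F : α → StrongDual ℝ V} {M : ℝ} (v : V)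
    (hmeas : AEStronglyMeasurable (fun s => F s v) μ) (hbound : ∀ᵐ s ∂μ, ‖F s‖ ≤ M) :
    Integrable (fun s => F s v) μ :=
  (integrable_const (M * ‖v‖)).mono' hmeas <| hbound.mono fun s hs =>
    ((F s).le_opNorm v).trans (mul_le_mul_of_nonneg_right hs (norm_nonneg v))

theorem integrable_indicator_apply_of_ae_norm_le {α : Type*} [MeasurableSpace α]
    {μ : Measure α} {s : Set α} (hs : MeasurableSet s) [IsFiniteMeasure (μ.restrict s)]
    {f : α → StrongDual ℝ V} {M : ℝ} (v : V)
    (hmeas : AEStronglyMeasurable (fun t => f t v) (μ.restrict s))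
    (hbound : ∀ᵐ t ∂μ.restrict s, ‖f t‖ ≤ M) : Integrable (fun t => s.indicator f t v) μ := by
  have hv : (fun t => s.indicator f t v) = s.indicator fun t => f t v := by
    ext t; by_cases ht : t ∈ s <;> simp [ht]
  rw [hv, integrable_indicator_iff hs]
  exact integrable_apply_of_ae_norm_le v hmeas hbound

variable {F g γ : ℝ → StrongDual ℝ V}

theorem norm_integral_apply_le {M : ℝ} (hbound : ∀ᵐ s, ‖F s‖ ≤ M) (a b : ℝ) (v : V) :
    ‖∫ s in a..b, F s v‖ ≤ M * ‖v‖ * |b - a| :=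
  intervalIntegral.norm_integral_le_of_norm_le_const_ae <| hbound.mono fun s hs _ =>
    ((F s).le_opNorm v).trans (mul_le_mul_of_nonneg_right hs (norm_nonneg v))

def IsWeakStarPrimitive (γ F : ℝ → StrongDual ℝ V) : Prop :=
  ∀ a b : ℝ, ∀ v : V, γ b v - γ a v = ∫ s in a..b, F s v

theorem exists_isWeakStarPrimitive {M : ℝ} (hint : ∀ v, LocallyIntegrable (fun s => F s v))
    (hbound : ∀ᵐ s, ‖F s‖ ≤ M) : ∃ γ : ℝ → StrongDual ℝ V, IsWeakStarPrimitive γ F := by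
  have hii : ∀ v a b, IntervalIntegrable (fun s => F s v) volume a b := fun v a b =>
    ((hint v).integrableOn_isCompact isCompact_uIcc).intervalIntegrable
  let γ : ℝ → StrongDual ℝ V := fun t => LinearMap.mkContinuous
    { toFun := fun v => ∫ s in 0..t, F s v
      map_add' := fun v w => by
        simp only [map_add]
        exact intervalIntegral.integral_add (hii v 0 t) (hii w 0 t)
      map_smul' := fun c v => by
        simp only [map_smul, smul_eq_mul, RingHom.id_apply]
        exact intervalIntegral.integral_const_mul c _ }
    (M * |t|) fun v => by
      simpa [mul_right_comm] using norm_integral_apply_le hbound 0 t v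
  exact ⟨γ, fun a b v => intervalIntegral.integral_interval_sub_left (hii v 0 b) (hii v 0 a)⟩

namespace IsWeakStarPrimitive

theorem lipschitzWith {M : ℝ≥0} (hγ : IsWeakStarPrimitive γ F) (hbound : ∀ᵐ s, ‖F s‖ ≤ M) :
    LipschitzWith M γ := by
  refine LipschitzWith.of_dist_le_mul fun a b => ?_
  rw [dist_eq_norm, Real.dist_eq]
  refine (γ a - γ b).opNorm_le_bound (by positivity) fun v => ?_
  rw [sub_apply, hγ b a v, mul_right_comm]
  exact norm_integral_apply_le hbound b a v

theorem congr_ae (hγ : IsWeakStarPrimitive γ F)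
    (hgF : ∀ v, (fun s => g s v) =ᵐ[volume] fun s => F s v) : IsWeakStarPrimitive γ g :=
  fun a b v => (hγ a b v).trans <|
    intervalIntegral.integral_congr_ae ((hgF v).mono fun _ hs _ => hs.symm)

theorem ae_deriv_apply_eq (hγ : IsWeakStarPrimitive γ F) {v : V}
    (hint : LocallyIntegrable (fun s => F s v)) :
    ∀ᵐ t, DifferentiableAt ℝ γ t → deriv γ t v = F t v := by
  filter_upwards [LocallyIntegrable.ae_hasDerivAt_integral hint] with t hF hd
  have hFt : HasDerivAt (fun s => γ s v) (F t v) t := by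
    rw [← hasDerivAt_sub_const_iff (γ 0 v)]
    simpa only [hγ 0] using hF 0
  exact (hd.hasDerivAt.clm_apply_const v).unique hFt

theorem weakStarLebesguePoint (hγ : IsWeakStarPrimitive γ g) {t : ℝ}
    (hd : HasDerivAt γ (g t) t) : WeakStarLebesguePoint g t := fun v =>
  (hd.clm_apply_const v).tendsto_slope_zero.congr fun h => by
    rw [← hγ t (t + h) v, smul_eq_mul, inv_mul_eq_div]

end IsWeakStarPrimitive

end WeakStarPrimitive

theorem hasWeakStarLDP_of_ae_norm_differentiable_general
    {V : Type*} [NormedAddCommGroup V] [NormedSpace ℝ V]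
    (hdiff : ∀ γ : ℝ → StrongDual ℝ V,
      (∃ K : ℝ≥0, LipschitzOnWith K γ (Set.Ioo (0:ℝ) 1)) →
      ∀ᵐ t ∂(volume.restrict (Set.Ioo (0:ℝ) 1)),
        ∃ d : StrongDual ℝ V,
          Filter.Tendsto (fun h : ℝ => h⁻¹ • (γ (t + h) - γ t))
            (nhdsWithin 0 {0}ᶜ) (nhds d)) :
    HasWeakStarLebesgueDensityProperty V := by
  intro f hmeas ⟨M, hM⟩
  set F := (Ioo (0:ℝ) 1).indicator f
  have hFint : ∀ v, LocallyIntegrable (fun s => F s v) := fun v =>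
    (integrable_indicator_apply_of_ae_norm_le measurableSet_Ioo v
      (hmeas v).aestronglyMeasurable hM).locallyIntegrable
  have hFbound : ∀ᵐ s, ‖F s‖ ≤ M.toNNReal := by
    filter_upwards [(ae_restrict_iff' measurableSet_Ioo).1 hM] with s hs
    by_cases hsI : s ∈ Ioo (0:ℝ) 1
    · simpa [F, hsI] using (hs hsI).trans (Real.le_coe_toNNReal M)
    · simp [F, hsI]
  obtain ⟨γ, hγ⟩ := exists_isWeakStarPrimitive hFint hFbound
  have hγdiff : ∀ᵐ t ∂volume.restrict (Ioo (0:ℝ) 1), DifferentiableAt ℝ γ t :=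
    (hdiff γ ⟨_, (hγ.lipschitzWith hFbound).lipschitzOnWith⟩).mono fun _ ⟨_, hd⟩ =>
      (hasDerivAt_iff_tendsto_slope_zero.2 hd).differentiableAt
  set g := (Ioo (0:ℝ) 1).indicator (deriv γ)
  have hgF : ∀ v, (fun s => g s v) =ᵐ[volume] fun s => F s v := fun v => by
    filter_upwards [hγ.ae_deriv_apply_eq (hFint v), (ae_restrict_iff' measurableSet_Ioo).1 hγdiff]
      with t hF hd
    by_cases ht : t ∈ Ioo (0:ℝ) 1
    · simp [g, F, ht, hF (hd ht)]
    · simp [g, F, ht]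
  refine ⟨g, fun v => ?_, ?_⟩
  · filter_upwards [ae_restrict_of_ae (hgF v), ae_restrict_mem measurableSet_Ioo] with t h ht
    simpa [g, F, ht] using h.symm
  · filter_upwards [hγdiff, ae_restrict_mem measurableSet_Ioo] with t hd ht
    exact (hγ.congr_ae hgF).weakStarLebesguePoint (by simpa [g, ht] using hd.hasDerivAt)

/-- Suppose every Lipschitz curve `γ : (0,1) → V*` is differentiable in norm at
almost every point (which holds in particular whenever `V*` has the Radon–Nikodým
property). Then `V*` has the weak* Lebesgue density property. -/
theorem hasWeakStarLDP_of_ae_norm_differentiable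
    {V : Type*} [NormedAddCommGroup V] [NormedSpace ℝ V] [CompleteSpace V]
    (hdiff : ∀ γ : ℝ → StrongDual ℝ V,
      (∃ K : ℝ≥0, LipschitzOnWith K γ (Set.Ioo (0:ℝ) 1)) →
      ∀ᵐ t ∂(volume.restrict (Set.Ioo (0:ℝ) 1)),
        ∃ d : StrongDual ℝ V,
          Filter.Tendsto (fun h : ℝ => h⁻¹ • (γ (t + h) - γ t))
            (nhdsWithin 0 {0}ᶜ) (nhds d)) :
    HasWeakStarLebesgueDensityProperty V :=
  hasWeakStarLDP_of_ae_norm_differentiable_general hdiff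
end
end

section
/- Let V be a real Banach space. The following are equivalent: (i) V* has the weak* Lebesgue density property; (ii) every absolutely continuous curve γ: (a,b) → V* (a < b real) is weak* differentiable at almost every t ∈ (a,b), i.e. for a.e. t there exists γ'(t) ∈ V* such that (γ(t+h) − γ(t))/h → γ'(t) in the weak* topology as h → 0. -/
open MeasureTheory Filter Set Topology NNReal ENNReal

noncomputable section

/-- `F : (a,b) → ℝ` is absolutely continuous: for every `ε > 0` there is `δ > 0` such
that for every finite family of pairwise disjoint subintervals of `(a,b)` of total
length `< δ`, the total variation of `F` over them is `< ε`. -/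
def AbsContOn (F : ℝ → ℝ) (a b : ℝ) : Prop :=
  ∀ ε > (0:ℝ), ∃ δ > (0:ℝ), ∀ (k : ℕ) (s t : Fin k → ℝ),
    (∀ i, s i ∈ Set.Ioo a b) → (∀ i, t i ∈ Set.Ioo a b) → (∀ i, s i ≤ t i) →
    (Pairwise fun i i' => Disjoint (Set.Ioo (s i) (t i)) (Set.Ioo (s i') (t i'))) →
    (∑ i, (t i - s i)) < δ → (∑ i, |F (t i) - F (s i)|) < ε

/-- `γ : (a,b) → X` is an absolutely continuous curve: it is rectifiable, i.e. its
length `ℓ(γ) = eVariationOn γ (a,b)` is finite, and `t ↦ ℓ(γ|_(a,t))` is an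
absolutely continuous real function. -/
def IsAbsContCurve {X : Type*} [PseudoMetricSpace X] (γ : ℝ → X) (a b : ℝ) : Prop :=
  eVariationOn γ (Set.Ioo a b) ≠ ⊤ ∧
  AbsContOn (fun t => (eVariationOn γ (Set.Ioo a t)).toReal) a b
/-!
A curve `γ` into `V*` is weak* differentiable at `t` with derivative `Λ` iff every scalar curve
`t ↦ ⟨v, γ t⟩` has derivative `⟨v, Λ⟩` at `t`. For a Lipschitz curve each scalar curve is
differentiable almost everywhere, but the exceptional null set depends on `v`.

(i) ⇒ (ii). For a Lipschitz curve `g`, choose for every `t` a weak* cluster point `f t` of the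
difference quotients (Banach–Alaoglu). Then `f ∈ L^∞_*`, `⟨v, f t⟩ = (d/dt)⟨v, g t⟩` for a.e. `t`,
and `⟨v, g⟩` is the primitive of `⟨v, f⟩`. So at every weak* Lebesgue point of the representative
given by (i), the difference quotients of `g` converge weak*. An absolutely continuous curve
becomes 1-Lipschitz after the change of variable `s = t + ℓ(γ|(a,t))`. The inverse change of
variable is 1-Lipschitz, so it maps null sets to null sets.

(ii) ⇒ (i). The Gelfand primitive of `f ∈ L^∞_*` is a Lipschitz curve. By the scalar Lebesgue
differentiation theorem, its a.e. weak* derivative is a weak* representative of `f`. Every point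
of weak* differentiability of the primitive is a weak* Lebesgue point of this representative.
-/

lemma LipschitzWith.volume_image_null {φ : ℝ → ℝ} {K : ℝ≥0} (hφ : LipschitzWith K φ)
    {N : Set ℝ} (hN : volume N = 0) : volume (φ '' N) = 0 := by
  have h := hφ.hausdorffMeasure_image_le zero_le_one N
  rw [hausdorffMeasure_real] at h
  simpa [hN] using h

lemma LipschitzWith.ae_restrict_comp {φ ψ : ℝ → ℝ} {K : ℝ≥0} (hφ : LipschitzWith K φ)
    {s t : Set ℝ} (ht : MeasurableSet t) (hψ : MapsTo ψ t s) (hφψ : LeftInvOn φ ψ t)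
    {P : ℝ → Prop} (hP : ∀ᵐ u ∂volume.restrict s, P u) :
    ∀ᵐ σ ∂volume.restrict t, P (ψ σ) := by
  rw [ae_restrict_iff' ht, ae_iff]
  refine measure_mono_null (fun σ hσ => ?_)
    (hφ.volume_image_null (Measure.measure_inter_eq_zero_of_restrict hP))
  push Not at hσ
  exact ⟨ψ σ, ⟨hσ.2, hψ hσ.1⟩, hφψ hσ.1⟩

lemma hasDerivAt_iff_tendsto_intervalAverage {φ u u' : ℝ → ℝ} {a b t L : ℝ}
    (ht : t ∈ Ioo a b) (hφ : ∀ x, φ x - φ t = ∫ s in t..x, u s)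
    (hu : u =ᵐ[volume.restrict (Ioo a b)] u') :
    HasDerivAt φ L t ↔ Tendsto (fun h => (∫ s in t..t + h, u' s) / h) (𝓝[≠] 0) (𝓝 L) := by
  rw [hasDerivAt_iff_tendsto_slope_zero]
  have hnear : ∀ᶠ h in 𝓝 (0:ℝ), t + h ∈ Ioo a b :=
    ((continuous_const_add t).tendsto' 0 t (add_zero t)).eventually (Ioo_mem_nhds ht.1 ht.2)
  refine tendsto_congr' ?_
  filter_upwards [nhdsWithin_le_nhds hnear] with h hh
  rw [hφ, smul_eq_mul, div_eq_inv_mul]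
  congr 1
  refine intervalIntegral.integral_congr_ae ?_
  filter_upwards [(ae_restrict_iff' measurableSet_Ioo).1 hu] with s hs hst
  exact hs (ordConnected_Ioo.uIcc_subset ht hh (uIoc_subset_uIcc hst))

lemma AbsContOn.continuousOn {F : ℝ → ℝ} {a b : ℝ} (hF : AbsContOn F a b) :
    ContinuousOn F (Ioo a b) := by
  refine Metric.continuousOn_iff.2 fun x hx ε hε => ?_
  obtain ⟨δ, hδ, h⟩ := hF ε hε
  have key : ∀ p ∈ Ioo a b, ∀ q ∈ Ioo a b, p ≤ q → q - p < δ → |F q - F p| < ε :=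
    fun p hp q hq hpq hlt => by
      simpa using h 1 (fun _ => p) (fun _ => q) (fun _ => hp) (fun _ => hq) (fun _ => hpq)
        Subsingleton.pairwise (by simpa using hlt)
  refine ⟨δ, hδ, fun y hy hxy => ?_⟩
  rw [Real.dist_eq] at hxy ⊢
  rcases le_total x y with h | h
  · exact key x hx y hy h (by rwa [abs_of_nonneg (sub_nonneg.2 h)] at hxy)
  · rw [abs_sub_comm]
    exact key y hy x hx h (by rwa [abs_of_nonpos (sub_nonpos.2 h), neg_sub] at hxy)

lemma LipschitzOnWith.absContOn {F : ℝ → ℝ} {K : ℝ≥0} {a b : ℝ}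
    (hF : LipschitzOnWith K F (Ioo a b)) : AbsContOn F a b := by
  intro ε hε
  refine ⟨ε / (K + 1), by positivity, fun k s t hs ht hst _ hsum => ?_⟩
  calc ∑ i, |F (t i) - F (s i)| ≤ ∑ i, K * (t i - s i) := Finset.sum_le_sum fun i _ => by
          simpa [Real.dist_eq, abs_of_nonneg (sub_nonneg.2 (hst i))] using
            hF.dist_le_mul (t i) (ht i) (s i) (hs i)
    _ = K * ∑ i, (t i - s i) := (Finset.mul_sum _ _ _).symm
    _ ≤ K * (ε / (K + 1)) := by gcongr
    _ < (K + 1) * (ε / (K + 1)) := by gcongr; linarith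
    _ = ε := by field_simp

section Variation

variable {X : Type*}

lemma eVariationOn_Ioo_eq_add_Icc [PseudoEMetricSpace X] {γ : ℝ → X} (hγ : Continuous γ)
    {a p q : ℝ} (hap : a < p) (hpq : p ≤ q) :
    eVariationOn γ (Ioo a q) = eVariationOn γ (Ioo a p) + eVariationOn γ (Icc p q) := by
  have hIoc : ∀ r, a < r → eVariationOn γ (Ioo a r) = eVariationOn γ (Ioc a r) := fun r hr => by
    have := right_nhdsWithin_Ioo_neBot hr
    simpa [Ioi_inter_Iio, Ioi_inter_Iic] using
      eVariationOn.eVariationOn_inter_Iio_eq_inter_Iic_of_continuousWithinAt (s := Ioi a)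
        (a := r) (by rwa [Ioi_inter_Iio]) hγ.continuousWithinAt
  rw [hIoc q (hap.trans_le hpq), hIoc p hap, ← eVariationOn.union γ (isGreatest_Ioc hap)
    (isLeast_Icc hpq), Ioc_union_Icc_eq_Ioc hap hpq]

lemma LipschitzWith.eVariationOn_Icc_le [PseudoEMetricSpace X] {γ : ℝ → X} {K : ℝ≥0}
    (hγ : LipschitzWith K γ) {p q : ℝ} :
    eVariationOn γ (Icc p q) ≤ ENNReal.ofReal (K * (q - p)) := by
  calc eVariationOn γ (Icc p q) = eVariationOn (γ ∘ id) (Icc p q) := rfl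
    _ ≤ K * eVariationOn id (Icc p q) :=
        hγ.lipschitzOnWith.comp_eVariationOn_le (mapsTo_univ _ _)
    _ = ENNReal.ofReal (K * (q - p)) := by
        rw [eVariationOn_id_Icc, ENNReal.ofReal_mul K.coe_nonneg, ENNReal.ofReal_coe_nnreal]

lemma LipschitzWith.isAbsContCurve [PseudoMetricSpace X] {γ : ℝ → X} {K : ℝ≥0}
    (hγ : LipschitzWith K γ) (a b : ℝ) : IsAbsContCurve γ a b := by
  have hfin : ∀ t, eVariationOn γ (Ioo a t) ≠ ⊤ := fun t =>
    ne_top_of_le_ne_top ofReal_ne_top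
      ((eVariationOn.mono γ Ioo_subset_Icc_self).trans hγ.eVariationOn_Icc_le)
  refine ⟨hfin b, LipschitzOnWith.absContOn
    (LipschitzOnWith.of_le_add_mul' K fun x hx y hy => ?_)⟩
  rcases le_total x y with hxy | hyx
  · have := ENNReal.toReal_mono (hfin y) (eVariationOn.mono γ (Ioo_subset_Ioo_right hxy))
    have := mul_nonneg K.coe_nonneg (dist_nonneg (x := x) (y := y))
    linarith
  · have h := (eVariationOn_Ioo_eq_add_Icc hγ.continuous hy.1 hyx).le.trans
      (add_le_add le_rfl hγ.eVariationOn_Icc_le)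
    have := ENNReal.toReal_mono (by finiteness [hfin y]) h
    rw [ENNReal.toReal_add (hfin y) ofReal_ne_top,
      ENNReal.toReal_ofReal (mul_nonneg K.coe_nonneg (sub_nonneg.2 hyx))] at this
    simpa [Real.dist_eq, abs_of_nonneg (sub_nonneg.2 hyx)] using this

lemma IsAbsContCurve.dist_le_sub [PseudoMetricSpace X] {γ : ℝ → X} {a b : ℝ}
    (hγ : IsAbsContCurve γ a b) {x y : ℝ} (hx : x ∈ Ioo a b) (hy : y ∈ Ioo a b)
    (hxy : x ≤ y) :
    dist (γ x) (γ y) ≤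
      (eVariationOn γ (Ioo a y)).toReal - (eVariationOn γ (Ioo a x)).toReal := by
  set F : ℝ → ℝ := fun t => (eVariationOn γ (Ioo a t)).toReal
  have hfin : ∀ t ≤ b, eVariationOn γ (Ioo a t) ≠ ⊤ := fun t ht =>
    ne_top_of_le_ne_top hγ.1 (eVariationOn.mono γ (Ioo_subset_Ioo_right ht))
  -- `y ∉ Ioo a y`, so compare with `Ioo a y'` for `y' > y` and let `y' → y`.
  have hbound : ∀ y' ∈ Ioo y b, dist (γ x) (γ y) ≤ F y' - F x := fun y' hy' => by
    have h : eVariationOn γ (Ioo a x) + edist (γ x) (γ y) ≤ eVariationOn γ (Ioo a y') :=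
      (add_le_add le_rfl
        (eVariationOn.edist_le γ (left_mem_Icc.2 hxy) (right_mem_Icc.2 hxy))).trans
        ((eVariationOn.add_le_union γ fun p hp q hq => hp.2.le.trans hq.1).trans
          (eVariationOn.mono γ (union_subset (Ioo_subset_Ioo_right (hxy.trans hy'.1.le))
            fun q hq => ⟨hx.1.trans_le hq.1, hq.2.trans_lt hy'.1⟩)))
    have := ENNReal.toReal_mono (hfin y' hy'.2.le) h
    rw [ENNReal.toReal_add (hfin x hx.2.le) (edist_ne_top _ _), ← dist_edist] at this
    linarith
  have hFy : Tendsto F (𝓝[>] y) (𝓝 (F y)) :=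
    (hγ.2.continuousOn.continuousAt (Ioo_mem_nhds hy.1 hy.2)).tendsto.mono_left
      nhdsWithin_le_nhds
  exact ge_of_tendsto (hFy.sub_const (F x)) (mem_of_superset (Ioo_mem_nhdsGT hy.2) hbound)

lemma lipschitzWith_one_of_dist_le_sub [PseudoMetricSpace X] {f : ℝ → X}
    (h : ∀ x y, x ≤ y → dist (f x) (f y) ≤ y - x) : LipschitzWith 1 f :=
  LipschitzWith.mk_one fun x y => by
    rcases le_total x y with hxy | hyx
    · simpa [Real.dist_eq, abs_of_nonpos (sub_nonpos.2 hxy)] using h x y hxy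
    · simpa [Real.dist_eq, abs_of_nonneg (sub_nonneg.2 hyx), dist_comm] using h y x hyx

lemma exists_lipschitz_reparametrization [PseudoMetricSpace X] {γ : ℝ → X} {ρ : ℝ → ℝ}
    {a b : ℝ} (hab : a ≤ b) (hρ : ContinuousOn ρ (Icc a b))
    (hγρ : ∀ x ∈ Icc a b, ∀ y ∈ Icc a b, x ≤ y → dist (γ x) (γ y) ≤ ρ y - ρ x) :
    ∃ (S : ℝ ≃o ℝ) (η : ℝ → X), LipschitzWith 1 S.symm ∧ LipschitzWith 1 η ∧
      ∀ t ∈ Icc a b, η (S t) = γ t := by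
  set c : ℝ → ℝ := fun t => projIcc a b hab t
  have hc : ∀ t, c t ∈ Icc a b := fun t => (projIcc a b hab t).2
  have hc_mono : Monotone c := fun x y h => monotone_projIcc hab h
  have hρ_mono : MonotoneOn ρ (Icc a b) := fun x hx y hy h =>
    sub_nonneg.1 (dist_nonneg.trans (hγρ x hx y hy h))
  -- `σ` grows at least as fast as the identity and as the length of `γ ∘ c`, so both its
  -- inverse and `γ ∘ c ∘ σ⁻¹` are 1-Lipschitz.
  set σ : ℝ → ℝ := fun t => t + ρ (c t)
  have hσ : ∀ x y, x ≤ y → (y - x) + dist (γ (c x)) (γ (c y)) ≤ σ y - σ x := fun x y h => by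
    have := hγρ _ (hc x) _ (hc y) (hc_mono h)
    simp only [σ]
    linarith
  have hσ_mono : StrictMono σ := fun x y h => by
    linarith [hσ x y h.le, dist_nonneg (x := γ (c x)) (y := γ (c y))]
  have hσ_top : Tendsto σ atTop atTop :=
    tendsto_atTop_mono (fun t => show t + ρ a ≤ σ t from
      add_le_add_right (hρ_mono (left_mem_Icc.2 hab) (hc t) (hc t).1) t)
      (tendsto_atTop_add_const_right _ _ tendsto_id)
  have hσ_bot : Tendsto σ atBot atBot :=
    tendsto_atBot_mono (fun t => show σ t ≤ t + ρ b from
      add_le_add_right (hρ_mono (hc t) (right_mem_Icc.2 hab) (hc t).2) t)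
      (tendsto_atBot_add_const_right _ _ tendsto_id)
  have hσ_cont : Continuous σ :=
    continuous_id.add (hρ.comp_continuous (continuous_subtype_val.comp continuous_projIcc) hc)
  set S := StrictMono.orderIsoOfSurjective σ hσ_mono (hσ_cont.surjective hσ_top hσ_bot)
  have hS : ∀ s s', s ≤ s' →
      (S.symm s' - S.symm s) + dist (γ (c (S.symm s))) (γ (c (S.symm s'))) ≤ s' - s := by
    intro s s' h
    simpa only [show σ (S.symm s') = s' from S.apply_symm_apply s',
      show σ (S.symm s) = s from S.apply_symm_apply s] using hσ _ _ (S.symm.monotone h)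
  refine ⟨S, fun s => γ (c (S.symm s)), lipschitzWith_one_of_dist_le_sub fun s s' h => ?_,
    lipschitzWith_one_of_dist_le_sub fun s s' h => ?_, fun t ht => ?_⟩
  · rw [Real.dist_eq, abs_of_nonpos (sub_nonpos.2 (S.symm.monotone h))]
    linarith [hS s s' h, dist_nonneg (x := γ (c (S.symm s))) (y := γ (c (S.symm s')))]
  · linarith [hS s s' h, S.symm.monotone h]
  · simp [c, projIcc_of_mem hab ht]

end Variation

section WeakStarDerivative

variable {V : Type*} [NormedAddCommGroup V] [NormedSpace ℝ V]

lemma exists_weakDual_clusterPt {ι : Type*} {l : Filter ι} [l.NeBot] {D : ι → StrongDual ℝ V}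
    {K : ℝ} (hD : ∀ i, ‖D i‖ ≤ K) :
    ∃ Λ : StrongDual ℝ V, ‖Λ‖ ≤ K ∧ ∀ v x, Tendsto (fun i => D i v) l (𝓝 x) → Λ v = x := by
  obtain ⟨Λ, hΛK, hΛ⟩ :=
    (WeakDual.isCompact_closedBall (𝕜 := ℝ) (E := V) 0 K).exists_mapClusterPt
      (u := fun i => StrongDual.toWeakDual (D i)) (f := l)
      (tendsto_principal.2 (Eventually.of_forall fun i => by simpa using hD i))
  refine ⟨WeakDual.toStrongDual Λ, by simpa using hΛK, fun v x hx => ?_⟩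
  exact eq_of_nhds_neBot
    ((hΛ.continuousAt_comp (WeakDual.eval_continuous v).continuousAt).clusterPt.mono hx)

def HasWeakStarDerivAt (γ : ℝ → StrongDual ℝ V) (Λ : StrongDual ℝ V) (t : ℝ) : Prop :=
  ∀ v, HasDerivAt (fun s => γ s v) (Λ v) t

lemma hasWeakStarDerivAt_iff_tendsto {γ : ℝ → StrongDual ℝ V} {Λ : StrongDual ℝ V} {t : ℝ} :
    HasWeakStarDerivAt γ Λ t ↔
      ∀ v, Tendsto (fun h : ℝ => (γ (t + h) v - γ t v) / h) (𝓝[≠] 0) (𝓝 (Λ v)) := by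
  simp only [HasWeakStarDerivAt, hasDerivAt_iff_tendsto_slope_zero, smul_eq_mul, div_eq_inv_mul]

lemma HasWeakStarDerivAt.comp_of_eventuallyEq {γ η : ℝ → StrongDual ℝ V} {Λ : StrongDual ℝ V}
    {S : ℝ → ℝ} {c t : ℝ} (hη : HasWeakStarDerivAt η Λ (S t)) (hS : HasDerivAt S c t)
    (hγ : γ =ᶠ[𝓝 t] η ∘ S) : HasWeakStarDerivAt γ (c • Λ) t := fun v => by
  refine (((hη v).comp t hS).congr_of_eventuallyEq ?_).congr_deriv (by simp [mul_comm])
  filter_upwards [hγ] with s hs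
  simp [hs]

lemma LipschitzWith.exists_weakStar_derivative {g : ℝ → StrongDual ℝ V} {K : ℝ≥0}
    (hg : LipschitzWith K g) :
    ∃ f : ℝ → StrongDual ℝ V, (∀ t, ‖f t‖ ≤ K) ∧
      (∀ v x y, g y v - g x v = ∫ t in x..y, f t v) ∧
      ∀ v, ∀ᵐ t, HasDerivAt (fun s => g s v) (f t v) t := by
  have hD : ∀ t h : ℝ, ‖h⁻¹ • (g (t + h) - g t)‖ ≤ K := by
    intro t h
    rcases eq_or_ne h 0 with rfl | hh
    · simp
    rw [norm_smul, norm_inv, ← dist_eq_norm, inv_mul_le_iff₀ (norm_pos_iff.2 hh)]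
    simpa [Real.dist_eq, mul_comm] using hg.dist_le_mul (t + h) t
  choose f hfK hf using fun t => exists_weakDual_clusterPt (l := 𝓝[≠] (0:ℝ)) (hD t)
  have hgv : ∀ v, LipschitzWith _ (fun s => g s v) := fun v =>
    (ContinuousLinearMap.apply ℝ ℝ v).lipschitz.comp hg
  have hderiv : ∀ v, ∀ᵐ t, HasDerivAt (fun s => g s v) (f t v) t := fun v => by
    filter_upwards [(hgv v).ae_differentiableAt] with t ht
    have hd := ht.hasDerivAt
    rwa [hf t v _ (by simpa [hasDerivAt_iff_tendsto_slope_zero] using hd)]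
  refine ⟨f, hfK, fun v x y => ?_, hderiv⟩
  rw [← (hgv v).lipschitzOnWith.absolutelyContinuousOnInterval.integral_deriv_eq_sub]
  exact intervalIntegral.integral_congr_ae ((hderiv v).mono fun s hs _ => hs.deriv)

lemma exists_lipschitz_weakStar_primitive {f : ℝ → StrongDual ℝ V}
    (hf : ∀ v, AEMeasurable (fun t => f t v)) {M : ℝ≥0} (hM : ∀ᵐ t, ‖f t‖ ≤ M) :
    ∃ γ : ℝ → StrongDual ℝ V, LipschitzWith M γ ∧
      (∀ v x y, γ y v - γ x v = ∫ t in x..y, f t v) ∧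
      ∀ v, ∀ᵐ t, HasDerivAt (fun s => γ s v) (f t v) t := by
  have hbound : ∀ v, ∀ᵐ t, ‖f t v‖ ≤ M * ‖v‖ := fun v =>
    hM.mono fun t ht => (f t).le_of_opNorm_le ht v
  have hloc : ∀ v, LocallyIntegrable (fun t => f t v) volume := fun v =>
    (memLp_top_of_bound (hf v).aestronglyMeasurable _ (hbound v)).locallyIntegrable le_top
  have hint : ∀ v x y, IntervalIntegrable (fun t => f t v) volume x y := fun v _ _ =>
    ((hloc v).integrableOn_isCompact isCompact_uIcc).intervalIntegrable
  have hnorm : ∀ v x y, ‖∫ t in x..y, f t v‖ ≤ M * ‖v‖ * |y - x| := fun v _ _ =>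
    intervalIntegral.norm_integral_le_of_norm_le_const_ae ((hbound v).mono fun _ ht _ => ht)
  let γ : ℝ → StrongDual ℝ V := fun x => LinearMap.mkContinuous
    { toFun := fun v => ∫ t in 0..x, f t v
      map_add' := fun v w => by
        simp only [map_add]
        exact intervalIntegral.integral_add (hint v 0 x) (hint w 0 x)
      map_smul' := fun c v => by simp [intervalIntegral.integral_const_mul] }
    (M * |x|) fun v => by simpa [mul_right_comm] using hnorm v 0 x
  have hγ : ∀ v x y, γ y v - γ x v = ∫ t in x..y, f t v := fun v x y =>
    intervalIntegral.integral_interval_sub_left (hint v 0 y) (hint v 0 x)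
  refine ⟨γ, LipschitzWith.of_dist_le_mul fun x y => ?_, hγ, fun v => ?_⟩
  · rw [dist_eq_norm]
    refine ContinuousLinearMap.opNorm_le_bound _ (by positivity) fun v => ?_
    rw [sub_apply, hγ, Real.dist_eq]
    exact (hnorm v y x).trans_eq (by ring)
  · filter_upwards [LocallyIntegrable.ae_hasDerivAt_integral (hloc v)] with t ht
    refine ((ht 0).const_add (γ 0 v)).congr_of_eventuallyEq (Eventually.of_forall fun s => ?_)
    simp [← hγ v 0 s]

theorem HasWeakStarLebesgueDensityProperty.ae_hasWeakStarDerivAt_Ioo_zero_one_of_lipschitz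
    (hV : HasWeakStarLebesgueDensityProperty V) {g : ℝ → StrongDual ℝ V} {K : ℝ≥0}
    (hg : LipschitzWith K g) :
    ∀ᵐ t ∂volume.restrict (Ioo (0:ℝ) 1), ∃ Λ, HasWeakStarDerivAt g Λ t := by
  obtain ⟨f, hfK, hftc, hf⟩ := hg.exists_weakStar_derivative
  have hmeas : ∀ v, AEMeasurable (fun t => f t v) (volume.restrict (Ioo 0 1)) := fun v =>
    ((measurable_deriv _).aemeasurable.congr ((hf v).mono fun t ht => ht.deriv)).restrict
  obtain ⟨g₀, hrep, hleb⟩ := hV f hmeas ⟨K, ae_of_all _ hfK⟩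
  filter_upwards [hleb, ae_restrict_mem measurableSet_Ioo] with t hlp ht
  exact ⟨g₀ t, fun v =>
    (hasDerivAt_iff_tendsto_intervalAverage ht (hftc v t) (hrep v)).2 (hlp v)⟩

theorem HasWeakStarLebesgueDensityProperty.ae_hasWeakStarDerivAt_Ioo_of_lipschitz
    (hV : HasWeakStarLebesgueDensityProperty V) {g : ℝ → StrongDual ℝ V} {K : ℝ≥0}
    (hg : LipschitzWith K g) (c d : ℝ) :
    ∀ᵐ t ∂volume.restrict (Ioo c d), ∃ Λ, HasWeakStarDerivAt g Λ t := by
  rcases le_or_gt d c with hdc | hcd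
  · simp [Ioo_eq_empty_of_le hdc]
  have hdc : 0 < d - c := sub_pos.2 hcd
  set φ : ℝ → ℝ := fun u => c + (d - c) * u
  set ψ : ℝ → ℝ := fun σ => (σ - c) / (d - c)
  have hφ : LipschitzWith (Real.toNNReal (d - c)) φ := LipschitzWith.of_dist_le_mul fun u u' => by
    simp [φ, Real.dist_eq, ← mul_sub, abs_mul, abs_of_pos hdc, hcd.le]
  have hψ : MapsTo ψ (Ioo c d) (Ioo 0 1) := fun σ hσ => by
    simp only [ψ, mem_Ioo, div_pos_iff_of_pos_right hdc, div_lt_one hdc]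
    constructor <;> linarith [hσ.1, hσ.2]
  have hφψ : ∀ σ, φ (ψ σ) = σ := fun σ => by
    simp only [φ, ψ]
    field_simp
    ring
  filter_upwards [hφ.ae_restrict_comp measurableSet_Ioo hψ (fun σ _ => hφψ σ)
    (hV.ae_hasWeakStarDerivAt_Ioo_zero_one_of_lipschitz (hg.comp hφ))] with σ ⟨Λ, hΛ⟩
  exact ⟨_, hΛ.comp_of_eventuallyEq (((hasDerivAt_id σ).sub_const c).div_const (d - c))
    (Eventually.of_forall fun σ => by simp [hφψ σ])⟩

theorem HasWeakStarLebesgueDensityProperty.ae_hasWeakStarDerivAt_of_isAbsContCurve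
    (hV : HasWeakStarLebesgueDensityProperty V) {γ : ℝ → StrongDual ℝ V} {a b : ℝ}
    (hγ : IsAbsContCurve γ a b) :
    ∀ᵐ t ∂volume.restrict (Ioo a b), ∃ Λ, HasWeakStarDerivAt γ Λ t := by
  refine ae_restrict_of_ae_restrict_inter_Ioo fun a' b' ha' hb' hab' => ?_
  have hsub : Icc a' b' ⊆ Ioo a b := Icc_subset_Ioo ha'.1 hb'.2
  rw [inter_eq_right.2 (Ioo_subset_Icc_self.trans hsub)]
  obtain ⟨S, η, hS, hη, hηS⟩ := exists_lipschitz_reparametrization hab'.le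
    (hγ.2.continuousOn.mono hsub) fun x hx y hy hxy => hγ.dist_le_sub (hsub hx) (hsub hy) hxy
  have hηS' := hS.ae_restrict_comp (s := Ioo (S a') (S b')) measurableSet_Ioo
    (fun t ht => ⟨S.strictMono ht.1, S.strictMono ht.2⟩) (fun t _ => S.symm_apply_apply t)
    (hV.ae_hasWeakStarDerivAt_Ioo_of_lipschitz hη (S a') (S b'))
  filter_upwards [hηS', ae_restrict_of_ae S.monotone.ae_differentiableAt,
    ae_restrict_mem measurableSet_Ioo] with t ⟨Λ, hΛ⟩ hSt ht
  exact ⟨_, hΛ.comp_of_eventuallyEq hSt.hasDerivAt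
    (mem_of_superset (Icc_mem_nhds ht.1 ht.2) fun s hs => (hηS s hs).symm)⟩

theorem hasWeakStarLebesgueDensityProperty_of_lipschitz
    (h : ∀ (γ : ℝ → StrongDual ℝ V) (K : ℝ≥0), LipschitzWith K γ →
      ∀ᵐ t ∂volume.restrict (Ioo (0:ℝ) 1), ∃ Λ, HasWeakStarDerivAt γ Λ t) :
    HasWeakStarLebesgueDensityProperty V := by
  classical
  intro f hmeas ⟨M, hM⟩
  set f₀ := (Ioo (0:ℝ) 1).indicator f
  have hf₀ : ∀ v, (fun t => f₀ t v) = (Ioo (0:ℝ) 1).indicator (fun t => f t v) := fun v =>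
    funext fun t => by by_cases ht : t ∈ Ioo (0:ℝ) 1 <;> simp [f₀, ht]
  have hf₀M : ∀ᵐ t, ‖f₀ t‖ ≤ M.toNNReal := by
    filter_upwards [(ae_restrict_iff' measurableSet_Ioo).1 hM] with t ht
    by_cases ht' : t ∈ Ioo (0:ℝ) 1
    · simpa [f₀, ht'] using (ht ht').trans (Real.le_coe_toNNReal M)
    · simp [f₀, ht']
  obtain ⟨γ, hγ, hγf, hγ'⟩ := exists_lipschitz_weakStar_primitive
    (fun v => hf₀ v ▸ (aemeasurable_indicator_iff measurableSet_Ioo).2 (hmeas v)) hf₀M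
  have hdiff := h γ _ hγ
  let g : ℝ → StrongDual ℝ V := fun t =>
    if hd : ∃ Λ, HasWeakStarDerivAt γ Λ t then hd.choose else 0
  have hg : ∀ t, (∃ Λ, HasWeakStarDerivAt γ Λ t) → HasWeakStarDerivAt γ (g t) t :=
    fun t hd => by simpa only [g, dif_pos hd] using hd.choose_spec
  have hrep : ∀ v, ∀ᵐ t ∂volume.restrict (Ioo (0:ℝ) 1), f₀ t v = g t v := fun v => by
    filter_upwards [hdiff, ae_restrict_of_ae (hγ' v)] with t hd ht
    exact ht.unique (hg t hd v)
  refine ⟨g, fun v => ?_, ?_⟩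
  · filter_upwards [hrep v, ae_restrict_mem measurableSet_Ioo] with t ht hmem
    simpa [f₀, hmem] using ht
  · filter_upwards [hdiff, ae_restrict_mem measurableSet_Ioo] with t hd ht v
    exact (hasDerivAt_iff_tendsto_intervalAverage ht (hγf v t) (hrep v)).1 (hg t hd v)

end WeakStarDerivative

theorem hasWeakStarLDP_iff_ae_weakStar_differentiable_general
    {V : Type*} [NormedAddCommGroup V] [NormedSpace ℝ V] :
    HasWeakStarLebesgueDensityProperty V ↔
      ∀ (a b : ℝ), a < b → ∀ γ : ℝ → StrongDual ℝ V, IsAbsContCurve γ a b →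
        ∀ᵐ t ∂(volume.restrict (Set.Ioo a b)),
          ∃ Λ : StrongDual ℝ V, ∀ v : V,
            Filter.Tendsto (fun h : ℝ => (γ (t + h) v - γ t v) / h)
              (nhdsWithin 0 {0}ᶜ) (nhds (Λ v)) := by
  simp only [← hasWeakStarDerivAt_iff_tendsto]
  refine ⟨fun hV a b _ γ hγ => hV.ae_hasWeakStarDerivAt_of_isAbsContCurve hγ,
    fun h => hasWeakStarLebesgueDensityProperty_of_lipschitz fun γ K hγ => ?_⟩
  exact h 0 1 one_pos γ (hγ.isAbsContCurve 0 1)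

/-- **Theorem.** The following are equivalent: (i) `V*` has the weak* Lebesgue density
property; (ii) every absolutely continuous curve `γ : (a,b) → V*` is weak*
differentiable at almost every `t ∈ (a,b)`. -/
theorem hasWeakStarLDP_iff_ae_weakStar_differentiable
    {V : Type*} [NormedAddCommGroup V] [NormedSpace ℝ V] [CompleteSpace V] :
    HasWeakStarLebesgueDensityProperty V ↔
      ∀ (a b : ℝ), a < b → ∀ γ : ℝ → StrongDual ℝ V, IsAbsContCurve γ a b →
        ∀ᵐ t ∂(volume.restrict (Set.Ioo a b)),
          ∃ Λ : StrongDual ℝ V, ∀ v : V,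
            Filter.Tendsto (fun h : ℝ => (γ (t + h) v - γ t v) / h)
              (nhdsWithin 0 {0}ᶜ) (nhds (Λ v)) :=
  hasWeakStarLDP_iff_ae_weakStar_differentiable_general
end
end
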